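/- arXiv:2603.20158 — 2 statements merged into one kernel-verified Lean document; each statement's English description precedes it below -/
import Mathlib

section
/- The 2-dimensional Gaussian R-matrix G_2 has spectrum {e^{iπ/4}, e^{-iπ/4}}, and the 3-dimensional Gaussian R-matrix G_3 has spectrum {i, e^{-iπ/6}}. -/
open Matrix Kronecker Complex

/-- The algebra `M_d ⊗ M_d` realized as matrices indexed by pairs. -/
abbrev MM (d : ℕ) := Matrix (Fin d × Fin d) (Fin d × Fin d) ℂ

/-- `R ⊗ 1` acting on the triple tensor product `ℂ^d ⊗ ℂ^d ⊗ ℂ^d`. -/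
def amp1 {d : ℕ} (R : MM d) :
    Matrix (Fin d × Fin d × Fin d) (Fin d × Fin d × Fin d) ℂ :=
  Matrix.of fun x y => R (x.1, x.2.1) (y.1, y.2.1) * (if x.2.2 = y.2.2 then 1 else 0)

/-- `1 ⊗ R` acting on the triple tensor product `ℂ^d ⊗ ℂ^d ⊗ ℂ^d`. -/
def amp2 {d : ℕ} (R : MM d) :
    Matrix (Fin d × Fin d × Fin d) (Fin d × Fin d × Fin d) ℂ :=
  Matrix.of fun x y => (if x.1 = y.1 then 1 else 0) * R (x.2.1, x.2.2) (y.2.1, y.2.2)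

/-- The Yang-Baxter equation `(R⊗1)(1⊗R)(R⊗1) = (1⊗R)(R⊗1)(1⊗R)`. -/
def YBE {d : ℕ} (R : MM d) : Prop :=
  amp1 R * amp2 R * amp1 R = amp2 R * amp1 R * amp2 R

/-- The root of unity `ξ`: `e^{2πi/d}` for `d` odd, `e^{πi/d}` for `d` even. -/
noncomputable def xi (d : ℕ) : ℂ :=
  if Odd d then Complex.exp (2 * Real.pi * Complex.I / d)
  else Complex.exp (Real.pi * Complex.I / d)

/-- The unitary `U` on `ℂ^d ⊗ ℂ^d` with `U(e_k ⊗ e_l) = ξ^{l-k} e_{k+1} ⊗ e_{l+1}`,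
indices mod `d`. -/
noncomputable def Ug (d : ℕ) [NeZero d] : MM d :=
  Matrix.of fun p q =>
    if p.1 = q.1 + 1 ∧ p.2 = q.2 + 1 then xi d ^ ((q.2 : ℤ) - (q.1 : ℤ)) else 0

/-- The Gaussian R-matrix `G_d = d^{-1/2} Σ_k ξ^{k²} U^k`. -/
noncomputable def Gg (d : ℕ) [NeZero d] : MM d :=
  ((Real.sqrt d : ℂ))⁻¹ • ∑ k ∈ Finset.range d, xi d ^ (k ^ 2) • Ug d ^ k

/-! `G_d = p_d(U)` for the polynomial `p_d(z) = d^{-1/2} Σ_{k<d} ξ^{k²} z^k`, so by spectral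
mapping `σ(G_d) = p_d(σ(U))`. For `d = 2, 3` one has `U^d = 1`, so `σ(U)` consists of `d`-th roots
of unity; `Σ_k e_k ⊗ e_k` is fixed by `U`, and `e_0 ⊗ e_0 - e_1 ⊗ e_1` resp. `Σ_k e_k ⊗ e_{k+1}` is
an eigenvector for `-1` resp. `ξ`. For `d = 3`, `p_3` takes the same value on both primitive cube
roots of unity, as `z² + z + 1 = 0` there. -/

open Polynomial

theorem Matrix.mem_spectrum_of_mulVec_eq {n R : Type*} [Fintype n] [DecidableEq n] [CommRing R]
    {A : Matrix n n R} {v : n → R} {μ : R} (hv : v ≠ 0) (h : A *ᵥ v = μ • v) :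
    μ ∈ spectrum R A := by
  rw [← Matrix.spectrum_toLin']
  exact (Module.End.hasEigenvalue_of_hasEigenvector
    ⟨Module.End.mem_eigenspace_iff.2 (by simpa using h), hv⟩).mem_spectrum

theorem spectrum.pow_eq_one_of_mem {𝕜 A : Type*} [Field 𝕜] [Ring A] [Algebra 𝕜 A] {a : A}
    {n : ℕ} (ha : a ^ n = 1) {z : 𝕜} (hz : z ∈ spectrum 𝕜 a) : z ^ n = 1 := by
  cases subsingleton_or_nontrivial A
  · simp [spectrum.of_subsingleton] at hz
  · simpa [ha, spectrum.one_eq] using spectrum.pow_mem_pow a n hz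

theorem Complex.ofReal_sqrt_sq {x : ℝ} (hx : 0 ≤ x) : (Real.sqrt x : ℂ) ^ 2 = x := by
  rw [← Complex.ofReal_pow, Real.sq_sqrt hx]

noncomputable def gaussPoly (d : ℕ) : ℂ[X] :=
  C (Real.sqrt d : ℂ)⁻¹ * ∑ k ∈ Finset.range d, C (xi d ^ (k ^ 2)) * X ^ k

theorem Gg_eq_aeval_gaussPoly (d : ℕ) [NeZero d] : Gg d = aeval (Ug d) (gaussPoly d) := by
  simp [Gg, gaussPoly, Algebra.smul_def, Finset.mul_sum]

theorem eval_gaussPoly (d : ℕ) (z : ℂ) :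
    (gaussPoly d).eval z =
      (Real.sqrt d : ℂ)⁻¹ * ∑ k ∈ Finset.range d, xi d ^ (k ^ 2) * z ^ k := by
  simp [gaussPoly, eval_finsetSum]

theorem spectrum_Gg (d : ℕ) [NeZero d] :
    spectrum ℂ (Gg d) = (fun z => (gaussPoly d).eval z) '' spectrum ℂ (Ug d) := by
  rw [Gg_eq_aeval_gaussPoly]
  exact spectrum.map_polynomial_aeval_of_nonempty _ _
    (spectrum.nonempty_of_isAlgClosed_of_finiteDimensional ℂ _)

theorem xi_ne_zero (d : ℕ) : xi d ≠ 0 := by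
  unfold xi; split_ifs <;> exact Complex.exp_ne_zero _

theorem Ug_mulVec_diag (d : ℕ) [NeZero d] :
    Ug d *ᵥ (fun p => if p.1 = p.2 then 1 else 0) = fun p => if p.1 = p.2 then 1 else 0 := by
  ext ⟨a, b⟩
  rw [Matrix.mulVec, dotProduct, Finset.sum_eq_single (a - 1, b - 1)]
  · by_cases hab : a = b <;> simp [Ug, hab]
  · rintro ⟨c, e⟩ - hce
    simp only [Ug, Matrix.of_apply, ite_mul, zero_mul, ite_eq_right_iff]
    rintro ⟨rfl, rfl⟩
    simp at hce
  · simp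

theorem one_mem_spectrum_Ug (d : ℕ) [NeZero d] : 1 ∈ spectrum ℂ (Ug d) := by
  refine Matrix.mem_spectrum_of_mulVec_eq (v := fun p => if p.1 = p.2 then 1 else 0) ?_ ?_
  · intro hv; simpa using congrFun hv (0, 0)
  · rw [one_smul, Ug_mulVec_diag]

theorem xi_two : xi 2 = I := by
  rw [xi, if_neg (by decide)]
  convert Complex.exp_pi_div_two_mul_I using 2
  push_cast; ring

-- The exponents `l - k` along each orbit of `(k, l) ↦ (k + 1, l + 1)` sum to `0`, so no relation
-- on `ξ` is needed.
theorem Ug_two_sq : Ug 2 ^ 2 = 1 := by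
  have hξ := xi_ne_zero 2
  ext ⟨a, b⟩ ⟨c, e⟩
  simp only [pow_succ, pow_zero, one_mul, Matrix.mul_apply, Fintype.sum_prod_type,
    Fin.sum_univ_two, Ug, Matrix.of_apply, Matrix.one_apply]
  fin_cases a <;> fin_cases b <;> fin_cases c <;> fin_cases e <;> simp <;> field_simp

theorem neg_one_mem_spectrum_Ug_two : -1 ∈ spectrum ℂ (Ug 2) := by
  refine Matrix.mem_spectrum_of_mulVec_eq
    (v := fun p => if p.1 = p.2 then (if p.1 = 0 then 1 else -1) else 0) ?_ ?_
  · intro hv; simpa using congrFun hv (0, 0)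
  · ext ⟨a, b⟩
    simp only [Matrix.mulVec, dotProduct, Fintype.sum_prod_type, Fin.sum_univ_two, Ug,
      Matrix.of_apply, xi_two]
    fin_cases a <;> fin_cases b <;> simp

theorem spectrum_Ug_two : spectrum ℂ (Ug 2) = {1, -1} := by
  refine subset_antisymm (fun z hz => ?_) (Set.insert_subset_iff.2
    ⟨one_mem_spectrum_Ug 2, Set.singleton_subset_iff.2 neg_one_mem_spectrum_Ug_two⟩)
  simpa using spectrum.pow_eq_one_of_mem Ug_two_sq hz

theorem eval_gaussPoly_two (z : ℂ) :
    (gaussPoly 2).eval z = (Real.sqrt 2 : ℂ)⁻¹ * (1 + I * z) := by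
  simp [eval_gaussPoly, Finset.sum_range_succ, xi_two]

theorem exp_pi_mul_I_div_four :
    Complex.exp (Real.pi * I / 4) = (Real.sqrt 2 : ℂ)⁻¹ * (1 + I) := by
  have h : (Real.pi * I / 4 : ℂ) = ((Real.pi / 4 : ℝ) : ℂ) * I := by push_cast; ring
  have h2 : (Real.sqrt 2 : ℂ) ^ 2 = 2 := by
    simpa using Complex.ofReal_sqrt_sq (x := 2) (by norm_num)
  rw [h, Complex.exp_mul_I, ← Complex.ofReal_cos, ← Complex.ofReal_sin, Real.cos_pi_div_four,
    Real.sin_pi_div_four]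
  field_simp
  push_cast
  linear_combination (1 + I) / 2 * h2

theorem exp_neg_pi_mul_I_div_four :
    Complex.exp (-(Real.pi * I) / 4) = (Real.sqrt 2 : ℂ)⁻¹ * (1 - I) := by
  have h : (-(Real.pi * I) / 4 : ℂ) = ((-(Real.pi / 4) : ℝ) : ℂ) * I := by push_cast; ring
  have h2 : (Real.sqrt 2 : ℂ) ^ 2 = 2 := by
    simpa using Complex.ofReal_sqrt_sq (x := 2) (by norm_num)
  rw [h, Complex.exp_mul_I, ← Complex.ofReal_cos, ← Complex.ofReal_sin, Real.cos_neg,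
    Real.sin_neg, Real.cos_pi_div_four, Real.sin_pi_div_four]
  field_simp
  push_cast
  linear_combination (1 - I) / 2 * h2

theorem spectrum_Gg_two :
    spectrum ℂ (Gg 2) =
      {Complex.exp (Real.pi * I / 4), Complex.exp (-(Real.pi * I) / 4)} := by
  rw [spectrum_Gg, spectrum_Ug_two, Set.image_pair, eval_gaussPoly_two, eval_gaussPoly_two,
    exp_pi_mul_I_div_four, exp_neg_pi_mul_I_div_four, mul_one, mul_neg_one, ← sub_eq_add_neg]

theorem xi_three : xi 3 = -1 / 2 + (Real.sqrt 3 / 2 : ℝ) * I := by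
  have h : 2 * Real.pi * I / ((3 : ℕ) : ℂ) = ((Real.pi - Real.pi / 3 : ℝ) : ℂ) * I := by
    push_cast; ring
  rw [xi, if_pos (by decide), h, Complex.exp_mul_I, ← Complex.ofReal_cos, ← Complex.ofReal_sin,
    Real.cos_pi_sub, Real.sin_pi_sub, Real.cos_pi_div_three, Real.sin_pi_div_three]
  push_cast; ring

theorem xi_three_pow_three : xi 3 ^ 3 = 1 := by
  rw [xi, if_pos (by decide), ← Complex.exp_nat_mul]
  convert Complex.exp_two_pi_mul_I using 2
  push_cast; ring

theorem Ug_three_pow_three : Ug 3 ^ 3 = 1 := by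
  have hξ := xi_ne_zero 3
  ext ⟨a, b⟩ ⟨c, e⟩
  simp only [pow_succ, pow_zero, one_mul, Matrix.mul_apply, Fintype.sum_prod_type,
    Fin.sum_univ_three, Ug, Matrix.of_apply, Matrix.one_apply]
  fin_cases a <;> fin_cases b <;> fin_cases c <;> fin_cases e <;> simp <;> field_simp

theorem xi_three_mem_spectrum_Ug_three : xi 3 ∈ spectrum ℂ (Ug 3) := by
  have hξ := xi_ne_zero 3
  refine Matrix.mem_spectrum_of_mulVec_eq (v := fun p => if p.2 = p.1 + 1 then 1 else 0) ?_ ?_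
  · intro hv; simpa using congrFun hv (0, 1)
  · ext ⟨a, b⟩
    simp only [Matrix.mulVec, dotProduct, Fintype.sum_prod_type, Fin.sum_univ_three, Ug,
      Matrix.of_apply, Pi.smul_apply, smul_eq_mul]
    fin_cases a <;> fin_cases b <;> simp
    field_simp
    exact xi_three_pow_three.symm

theorem eval_gaussPoly_three (z : ℂ) :
    (gaussPoly 3).eval z = (Real.sqrt 3 : ℂ)⁻¹ * (1 + xi 3 * z + xi 3 * z ^ 2) := by
  have h4 : xi 3 ^ 4 = xi 3 := by linear_combination xi 3 * xi_three_pow_three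
  simp [eval_gaussPoly, Finset.sum_range_succ, h4]

theorem exp_neg_pi_mul_I_div_six :
    Complex.exp (-(Real.pi * I) / 6) = (Real.sqrt 3 / 2 : ℝ) - I / 2 := by
  have h : (-(Real.pi * I) / 6 : ℂ) = ((-(Real.pi / 6) : ℝ) : ℂ) * I := by push_cast; ring
  rw [h, Complex.exp_mul_I, ← Complex.ofReal_cos, ← Complex.ofReal_sin, Real.cos_neg,
    Real.sin_neg, Real.cos_pi_div_six, Real.sin_pi_div_six]
  push_cast; ring

theorem eval_one_gaussPoly_three : (gaussPoly 3).eval 1 = I := by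
  rw [eval_gaussPoly_three, xi_three]
  field_simp
  push_cast
  ring

theorem eval_gaussPoly_three_of_pow_eq_one {z : ℂ} (hz : z ^ 3 = 1) (h1 : z ≠ 1) :
    (gaussPoly 3).eval z = Complex.exp (-(Real.pi * I) / 6) := by
  have hcyc : z ^ 2 + z + 1 = 0 := by
    have : (z - 1) * (z ^ 2 + z + 1) = 0 := by linear_combination hz
    exact (mul_eq_zero.1 this).resolve_left (sub_ne_zero.2 h1)
  have h3 : (Real.sqrt 3 : ℂ) ^ 2 = 3 := by
    simpa using Complex.ofReal_sqrt_sq (x := 3) (by norm_num)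
  rw [eval_gaussPoly_three, exp_neg_pi_mul_I_div_six, xi_three]
  field_simp
  push_cast
  linear_combination (Real.sqrt 3 * I - 1 : ℂ) * hcyc - h3

theorem spectrum_Gg_three :
    spectrum ℂ (Gg 3) = {I, Complex.exp (-(Real.pi * I) / 6)} := by
  rw [spectrum_Gg]
  refine subset_antisymm ?_ (Set.insert_subset_iff.2 ⟨⟨1, one_mem_spectrum_Ug 3,
    eval_one_gaussPoly_three⟩, Set.singleton_subset_iff.2 ⟨xi 3, xi_three_mem_spectrum_Ug_three,
      eval_gaussPoly_three_of_pow_eq_one xi_three_pow_three ?_⟩⟩)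
  · rintro _ ⟨z, hz, rfl⟩
    by_cases h1 : z = 1
    · exact Or.inl (h1 ▸ eval_one_gaussPoly_three)
    · exact Or.inr (eval_gaussPoly_three_of_pow_eq_one
        (spectrum.pow_eq_one_of_mem Ug_three_pow_three hz) h1)
  · intro h; simp [xi_three, Complex.ext_iff] at h

/-- The spectra of the Gaussian R-matrices in dimensions 2 and 3:
`σ(G_2) = {e^{iπ/4}, e^{-iπ/4}}` and `σ(G_3) = {i, e^{-iπ/6}}`. -/
theorem gaussian_spectrum_dim_two_three :
    spectrum ℂ (Gg 2) =
        {Complex.exp (Real.pi * Complex.I / 4), Complex.exp (-(Real.pi * Complex.I) / 4)} ∧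
      spectrum ℂ (Gg 3) = {Complex.I, Complex.exp (-(Real.pi * Complex.I) / 6)} :=
  ⟨spectrum_Gg_two, spectrum_Gg_three⟩
end

section
/- Let q ∈ ℂ \ {-1} and let P be an orthogonal projection on V⊗V such that R = -P + q(1-P) solves the Yang-Baxter equation. Then R' = -(1-P) + qP also solves the Yang-Baxter equation and is unitary with spectrum {-1, q} whenever |q| = 1 and P ≠ 0, 1. -/
open Matrix Kronecker Complex

/-! Write `R = a • P + b • (1 - P)`. Since `P` and `1 - P` are complementary idempotents, `R`
satisfies the Hecke relation `R² = -ab + (a + b) R`, and the exchanged operator is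
`R' = (a + b) - R`. The maps `R ↦ R ⊗ 1` and `R ↦ 1 ⊗ R` are unital algebra homomorphisms, so
`X = R ⊗ 1` and `Y = 1 ⊗ R` satisfy the same Hecke relation. Expanding the braid relation for
`c - X` and `c - Y` with `c = a + b`, the terms of degree three cancel by the braid relation
for `X, Y` and the remaining ones by the Hecke relation. Unitarity and the spectrum of `R'` are
read off from the decomposition `1 = P + (1 - P)`. -/

section SpectralDecomposition

variable {R A : Type*} [CommRing R] [Ring A] [Algebra R A]

theorem braid_sub_of_mul_self_eq {a b : R} {X Y : A} (hX : X * X = a • 1 + b • X)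
    (hY : Y * Y = a • 1 + b • Y) (h : X * Y * X = Y * X * Y) :
    (b • 1 - X) * (b • 1 - Y) * (b • 1 - X) = (b • 1 - Y) * (b • 1 - X) * (b • 1 - Y) := by
  simp only [sub_mul, mul_sub, smul_mul_assoc, mul_smul_comm, one_mul, mul_one, smul_smul,
    smul_sub]
  rw [hX, hY, h]
  module

theorem IsIdempotentElem.smul_add_smul_one_sub_mul {p : A} (hp : IsIdempotentElem p)
    (a b c e : R) :
    (a • p + b • (1 - p)) * (c • p + e • (1 - p)) = (a * c) • p + (b * e) • (1 - p) := by
  simp only [add_mul, mul_add, sub_mul, mul_sub, smul_mul_assoc, mul_smul_comm, one_mul, mul_one,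
    hp.eq]
  module

theorem IsIdempotentElem.mul_self_smul_add_smul_one_sub {p : A} (hp : IsIdempotentElem p)
    (a b : R) :
    (a • p + b • (1 - p)) * (a • p + b • (1 - p)) =
      (-(a * b)) • 1 + (a + b) • (a • p + b • (1 - p)) := by
  rw [hp.smul_add_smul_one_sub_mul]
  module

theorem IsStarProjection.smul_add_smul_one_sub_mem_unitary [StarRing R] [StarRing A]
    [StarModule R A] {p : A} (hp : IsStarProjection p) {a b : R} (ha : a ∈ unitary R)
    (hb : b ∈ unitary R) : a • p + b • (1 - p) ∈ unitary A := by
  have hstar : star (a • p + b • (1 - p)) = star a • p + star b • (1 - p) := by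
    simp [hp.isSelfAdjoint.star_eq]
  rw [Unitary.mem_iff, hstar, hp.isIdempotentElem.smul_add_smul_one_sub_mul,
    hp.isIdempotentElem.smul_add_smul_one_sub_mul, Unitary.star_mul_self_of_mem ha,
    Unitary.star_mul_self_of_mem hb, Unitary.mul_star_self_of_mem ha,
    Unitary.mul_star_self_of_mem hb]
  simp

theorem IsIdempotentElem.spectrum_smul_add_smul_one_sub {𝕜 : Type*} [Field 𝕜] [Algebra 𝕜 A]
    {p : A} (hp : IsIdempotentElem p) (hp0 : p ≠ 0) (hp1 : p ≠ 1) (a b : 𝕜) :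
    spectrum 𝕜 (a • p + b • (1 - p)) = {a, b} := by
  ext μ
  have hshift : algebraMap 𝕜 A μ - (a • p + b • (1 - p)) = (μ - a) • p + (μ - b) • (1 - p) := by
    rw [Algebra.algebraMap_eq_smul_one]
    module
  rw [spectrum.mem_iff, hshift, Set.mem_insert_iff, Set.mem_singleton_iff]
  constructor
  · intro hμ
    by_contra! hne
    refine hμ ⟨⟨_, (μ - a)⁻¹ • p + (μ - b)⁻¹ • (1 - p), ?_, ?_⟩, rfl⟩ <;>
    · simp [hp.smul_add_smul_one_sub_mul, sub_ne_zero.2 hne.1, sub_ne_zero.2 hne.2]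
  · rintro (rfl | rfl) hunit
    · refine hp0 (hunit.mul_right_eq_zero.1 ?_)
      simpa using hp.smul_add_smul_one_sub_mul (μ - μ) (μ - b) 1 0
    · refine hp1 (sub_eq_zero.1 (hunit.mul_right_eq_zero.1 ?_)).symm
      simpa using hp.smul_add_smul_one_sub_mul (μ - a) (μ - μ) 0 1

end SpectralDecomposition

def amp1AlgHom (d : ℕ) :
    MM d →ₐ[ℂ] Matrix (Fin d × Fin d × Fin d) (Fin d × Fin d × Fin d) ℂ :=
  ((reindexAlgEquiv ℂ ℂ (Equiv.prodAssoc _ _ _)).toAlgHom.comp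
    (kroneckerAlgEquiv (Fin d × Fin d) (Fin d) ℂ).toAlgHom).comp
    (Algebra.TensorProduct.includeLeft (S := ℂ) (B := Matrix (Fin d) (Fin d) ℂ))

def amp2AlgHom (d : ℕ) :
    MM d →ₐ[ℂ] Matrix (Fin d × Fin d × Fin d) (Fin d × Fin d × Fin d) ℂ :=
  (kroneckerAlgEquiv (Fin d) (Fin d × Fin d) ℂ).toAlgHom.comp
    (Algebra.TensorProduct.includeRight (A := Matrix (Fin d) (Fin d) ℂ))

theorem coe_amp1AlgHom (d : ℕ) : ⇑(amp1AlgHom d) = amp1 := by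
  ext R x y
  simp [amp1AlgHom, amp1, one_apply]

theorem coe_amp2AlgHom (d : ℕ) : ⇑(amp2AlgHom d) = amp2 := by
  ext R x y
  simp [amp2AlgHom, amp2, one_apply]

theorem YBE.smul_one_sub {d : ℕ} {R : MM d} {a b : ℂ} (hR : R * R = a • 1 + b • R)
    (h : YBE R) : YBE (b • 1 - R) := by
  rw [YBE, ← coe_amp1AlgHom, ← coe_amp2AlgHom] at h ⊢
  have hamp {f : MM d →ₐ[ℂ] Matrix (Fin d × Fin d × Fin d) (Fin d × Fin d × Fin d) ℂ} :
      f R * f R = a • 1 + b • f R := by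
    rw [← map_mul, hR, map_add, map_smul, map_smul, map_one]
  simp only [map_sub, map_smul, map_one]
  exact braid_sub_of_mul_self_eq hamp hamp h

theorem YBE.swap_smul_add_smul_one_sub {d : ℕ} {P : MM d} (hP : IsIdempotentElem P) {a b : ℂ}
    (h : YBE (a • P + b • (1 - P))) : YBE (b • P + a • (1 - P)) := by
  rw [show b • P + a • (1 - P) = (a + b) • 1 - (a • P + b • (1 - P)) by module]
  exact h.smul_one_sub (hP.mul_self_smul_add_smul_one_sub a b)

theorem flipped_Rmatrix_general (d : ℕ) (q : ℂ) (P : MM d)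
    (hidem : P * P = P) (hsa : Pᴴ = P)
    (hYBE : YBE (q • (1 : MM d) - (1 + q) • P)) :
    YBE (q • P - ((1 : MM d) - P)) ∧
      (‖q‖ = 1 → P ≠ 0 → P ≠ 1 →
        (q • P - ((1 : MM d) - P)) ∈ Matrix.unitaryGroup (Fin d × Fin d) ℂ ∧
          spectrum ℂ (q • P - ((1 : MM d) - P)) = {-1, q}) := by
  have hP : IsStarProjection P := ⟨hidem, hsa⟩
  rw [show q • (1 : MM d) - (1 + q) • P = (-1 : ℂ) • P + q • (1 - P) by module] at hYBE
  rw [show q • P - ((1 : MM d) - P) = q • P + (-1 : ℂ) • (1 - P) by module]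
  refine ⟨hYBE.swap_smul_add_smul_one_sub hP.isIdempotentElem, fun hq hP0 hP1 => ⟨?_, ?_⟩⟩
  · have hq_unitary : q ∈ unitary ℂ := by
      rw [Unitary.mem_iff_star_mul_self, RCLike.star_def, RCLike.conj_mul, hq]
      simp
    exact hP.smul_add_smul_one_sub_mem_unitary hq_unitary (by simp [Unitary.mem_iff])
  · rw [hP.isIdempotentElem.spectrum_smul_add_smul_one_sub hP0 hP1, Set.pair_comm]

/-- If `R = -P + q(1-P)` solves the Yang-Baxter equation for an orthogonal projection `P`,
then the "flipped" operator `R' = -(1-P) + qP` also solves the Yang-Baxter equation, and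
it is unitary with spectrum `{-1, q}` whenever `|q| = 1` and `P ≠ 0, 1`. -/
theorem flipped_Rmatrix (d : ℕ) (q : ℂ) (hq : q ≠ -1) (P : MM d)
    (hidem : P * P = P) (hsa : Pᴴ = P)
    (hYBE : YBE (q • (1 : MM d) - (1 + q) • P)) :
    YBE (q • P - ((1 : MM d) - P)) ∧
      (‖q‖ = 1 → P ≠ 0 → P ≠ 1 →
        (q • P - ((1 : MM d) - P)) ∈ Matrix.unitaryGroup (Fin d × Fin d) ℂ ∧
          spectrum ℂ (q • P - ((1 : MM d) - P)) = {-1, q}) :=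
  flipped_Rmatrix_general d q P hidem hsa hYBE
end
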